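/- (Finite termination of policy iteration.) Let (μ^k)_{k∈ℕ} be any sequence of stationary deterministic policies such that for every k, T_{μ^{k+1}} J_{μ^k} = T J_{μ^k} (each successive policy is greedy with respect to the value of its predecessor). Then there exists N ∈ ℕ such that J_{μ^N} = J*, i.e., policy iteration reaches an optimal policy in finitely many steps. -/

import Mathlib

/-- The Bellman operator `T` of the finite discounted MDP. -/
noncomputable def Tbell {S A : Type*} [Fintype S] [Fintype A] [Nonempty A]
    (P : S → A → S → ℝ) (g : S → A → ℝ) (α : ℝ) (J : S → ℝ) : S → ℝ :=
  fun x => Finset.univ.inf' Finset.univ_nonempty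
    (fun a : A => g x a + α * ∑ y, P x a y * J y)

/-- The one-stage DP operator `T_μ` for a stationary deterministic policy `μ`. -/
noncomputable def Tpol {S A : Type*} [Fintype S]
    (P : S → A → S → ℝ) (g : S → A → ℝ) (α : ℝ) (μ : S → A) (J : S → ℝ) : S → ℝ :=
  fun x => g x (μ x) + α * ∑ y, P x (μ x) y * J y

/-- The transition matrix `P_μ` of a stationary deterministic policy `μ`. -/
def Pmat {S A : Type*} (P : S → A → S → ℝ) (μ : S → A) : Matrix S S ℝ :=
  fun x y => P x (μ x) y

/-- The stage-cost vector `g_μ` of a stationary deterministic policy `μ`. -/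
def gvec {S A : Type*} (g : S → A → ℝ) (μ : S → A) : S → ℝ :=
  fun x => g x (μ x)

/-- The value function `J_μ(x) = ∑_{t} α^t (P_μ^t g_μ)(x)` of policy `μ`. -/
noncomputable def Jval {S A : Type*} [Fintype S] [DecidableEq S]
    (P : S → A → S → ℝ) (g : S → A → ℝ) (α : ℝ) (μ : S → A) : S → ℝ :=
  fun x => ∑' t : ℕ, α ^ t * ((Pmat P μ ^ t).mulVec (gvec g μ)) x

/-!
Each `J_μ` is the fixed point of `T_μ`, and `T_μ J - T_μ J' = α P_μ (J - J')` with `P_μ`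
stochastic, so a maximum principle yields the comparison `J ≤ T_μ J → T_μ J' ≤ J' → J ≤ J'`.
Hence a greedy step never increases the value, and `T` has a unique fixed point. There are only
finitely many policies, so the antitone sequence `J_{μ^k}` stalls at some `k`; then
`T J_{μ^k} = T_{μ^{k+1}} J_{μ^{k+1}} = J_{μ^k}`, i.e. `J_{μ^k} = J*`.
-/

open Matrix

namespace Matrix

variable {n : Type*} [Fintype n] [DecidableEq n] {M : Matrix n n ℝ}

lemma mulVec_le_of_mem_rowStochastic (hM : M ∈ rowStochastic ℝ n) {v : n → ℝ} {c : ℝ}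
    (hv : ∀ j, v j ≤ c) (i : n) : (M *ᵥ v) i ≤ c :=
  calc (M *ᵥ v) i = ∑ j, M i j * v j := rfl
    _ ≤ ∑ j, M i j * c :=
      Finset.sum_le_sum fun j _ => mul_le_mul_of_nonneg_left (hv j) (nonneg_of_mem_rowStochastic hM)
    _ = c := by rw [← Finset.sum_mul, sum_row_of_mem_rowStochastic hM, one_mul]

lemma norm_mulVec_le_of_mem_rowStochastic (hM : M ∈ rowStochastic ℝ n) (v : n → ℝ) :
    ‖M *ᵥ v‖ ≤ ‖v‖ := by
  have bound (w : n → ℝ) (hw : ‖w‖ = ‖v‖) (i : n) : (M *ᵥ w) i ≤ ‖v‖ :=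
    mulVec_le_of_mem_rowStochastic hM (fun j => hw ▸ (le_abs_self _).trans (norm_le_pi_norm w j)) i
  refine (pi_norm_le_iff_of_nonneg (norm_nonneg v)).2 fun i => abs_le.2 ⟨?_, bound v rfl i⟩
  have := bound (-v) (norm_neg v) i
  rw [mulVec_neg, Pi.neg_apply] at this
  linarith

/-- Maximum principle: at a maximum `k` of `d`, `d k ≤ α (M d) k ≤ α d k`. -/
lemma nonpos_of_le_smul_mulVec (hM : M ∈ rowStochastic ℝ n) {α : ℝ} (hα0 : 0 ≤ α) (hα1 : α < 1)
    {d : n → ℝ} (hd : d ≤ α • (M *ᵥ d)) : d ≤ 0 := by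
  intro i
  have : Nonempty n := ⟨i⟩
  obtain ⟨k, hk⟩ := Finite.exists_max d
  have hdk : d k ≤ α * d k :=
    (hd k).trans (mul_le_mul_of_nonneg_left (mulVec_le_of_mem_rowStochastic hM hk k) hα0)
  have : d k ≤ 0 := by nlinarith
  exact (hk i).trans this

lemma summable_pow_smul_pow_mulVec (hM : M ∈ rowStochastic ℝ n) {α : ℝ} (hα0 : 0 ≤ α)
    (hα1 : α < 1) (v : n → ℝ) : Summable fun t : ℕ => α ^ t • (M ^ t *ᵥ v) := by
  refine Summable.of_norm_bounded ((summable_geometric_of_lt_one hα0 hα1).mul_left ‖v‖) fun t => ?_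
  rw [norm_smul, Real.norm_of_nonneg (pow_nonneg hα0 t), mul_comm]
  exact mul_le_mul_of_nonneg_right
    (norm_mulVec_le_of_mem_rowStochastic (pow_mem hM t) v) (pow_nonneg hα0 t)

lemma tsum_pow_smul_pow_mulVec_eq (hM : M ∈ rowStochastic ℝ n) {α : ℝ} (hα0 : 0 ≤ α)
    (hα1 : α < 1) (v : n → ℝ) :
    ∑' t : ℕ, α ^ t • (M ^ t *ᵥ v) = v + α • (M *ᵥ ∑' t : ℕ, α ^ t • (M ^ t *ᵥ v)) := by
  set f : ℕ → n → ℝ := fun t => α ^ t • (M ^ t *ᵥ v)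
  have hf : HasSum f (∑' t, f t) := (summable_pow_smul_pow_mulVec hM hα0 hα1 v).hasSum
  let L : (n → ℝ) →L[ℝ] (n → ℝ) := LinearMap.toContinuousLinearMap (α • M.mulVecLin)
  have hshift : ∀ t, f (t + 1) = L (f t) := fun t => by
    simp [f, L, pow_succ', ← mulVec_mulVec, smul_smul, mul_comm]
  have htail : HasSum (fun t => f (t + 1)) (∑' t, f t - f 0) := by
    simpa using (hasSum_nat_add_iff' 1).2 hf
  have hL : HasSum (fun t => f (t + 1)) (L (∑' t, f t)) := by
    simpa only [hshift] using L.hasSum hf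
  have := htail.unique hL
  rw [sub_eq_iff_eq_add'] at this
  simpa [f, L] using this

end Matrix

section MDP

variable {S A : Type*} [Fintype S] {P : S → A → S → ℝ} {g : S → A → ℝ} {α : ℝ}

lemma Tpol_eq (μ : S → A) (J : S → ℝ) :
    Tpol P g α μ J = gvec g μ + α • (Pmat P μ *ᵥ J) :=
  rfl

lemma Tpol_sub_Tpol (μ : S → A) (J J' : S → ℝ) :
    Tpol P g α μ J - Tpol P g α μ J' = α • (Pmat P μ *ᵥ (J - J')) := by
  rw [Tpol_eq, Tpol_eq, mulVec_sub, smul_sub, add_sub_add_left_eq_sub]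

lemma Tbell_le_Tpol [Fintype A] [Nonempty A] (μ : S → A) (J : S → ℝ) :
    Tbell P g α J ≤ Tpol P g α μ J :=
  fun x => Finset.inf'_le _ (Finset.mem_univ (μ x))

lemma exists_Tpol_eq_Tbell [Fintype A] [Nonempty A] (J : S → ℝ) :
    ∃ μ : S → A, Tpol P g α μ J = Tbell P g α J := by
  choose μ _ hμ using fun x => Finset.exists_mem_eq_inf' Finset.univ_nonempty
    (fun a : A => g x a + α * ∑ y, P x a y * J y)
  exact ⟨μ, funext fun x => (hμ x).symm⟩

variable [DecidableEq S]

lemma Pmat_mem_rowStochastic (hP0 : ∀ x a y, 0 ≤ P x a y) (hP1 : ∀ x a, ∑ y, P x a y = 1)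
    (μ : S → A) : Pmat P μ ∈ rowStochastic ℝ S :=
  mem_rowStochastic_iff_sum.2 ⟨fun x y => hP0 x (μ x) y, fun x => hP1 x (μ x)⟩

section Policy

variable {μ : S → A} (hμ : Pmat P μ ∈ rowStochastic ℝ S) (hα0 : 0 ≤ α) (hα1 : α < 1)
include hμ hα0 hα1

lemma Jval_eq_tsum : Jval P g α μ = ∑' t : ℕ, α ^ t • (Pmat P μ ^ t *ᵥ gvec g μ) := by
  ext x
  rw [tsum_apply (summable_pow_smul_pow_mulVec hμ hα0 hα1 _)]
  rfl

lemma Tpol_Jval : Tpol P g α μ (Jval P g α μ) = Jval P g α μ := by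
  rw [Tpol_eq, Jval_eq_tsum hμ hα0 hα1, ← tsum_pow_smul_pow_mulVec_eq hμ hα0 hα1]

lemma le_of_le_Tpol_of_Tpol_le {J J' : S → ℝ} (hJ : J ≤ Tpol P g α μ J)
    (hJ' : Tpol P g α μ J' ≤ J') : J ≤ J' := by
  refine sub_nonpos.1 (nonpos_of_le_smul_mulVec hμ hα0 hα1 ?_)
  rw [← Tpol_sub_Tpol]
  exact sub_le_sub hJ hJ'

lemma Jval_le_of_Tpol_le {J : S → ℝ} (hJ : Tpol P g α μ J ≤ J) : Jval P g α μ ≤ J :=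
  le_of_le_Tpol_of_Tpol_le hμ hα0 hα1 (Tpol_Jval hμ hα0 hα1).ge hJ

end Policy

variable [Fintype A] [Nonempty A] (hP : ∀ μ : S → A, Pmat P μ ∈ rowStochastic ℝ S)
  (hα0 : 0 ≤ α) (hα1 : α < 1)
include hP hα0 hα1

lemma le_of_le_Tbell_of_Tbell_le {J J' : S → ℝ} (hJ : J ≤ Tbell P g α J)
    (hJ' : Tbell P g α J' ≤ J') : J ≤ J' := by
  obtain ⟨μ, hμ⟩ := exists_Tpol_eq_Tbell (P := P) (g := g) (α := α) J'
  exact le_of_le_Tpol_of_Tpol_le (hP μ) hα0 hα1 (hJ.trans (Tbell_le_Tpol μ J)) (hμ ▸ hJ')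

lemma eq_of_Tbell_eq_self {J J' : S → ℝ} (hJ : Tbell P g α J = J) (hJ' : Tbell P g α J' = J') :
    J = J' :=
  le_antisymm (le_of_le_Tbell_of_Tbell_le hP hα0 hα1 hJ.ge hJ'.le)
    (le_of_le_Tbell_of_Tbell_le hP hα0 hα1 hJ'.ge hJ.le)

lemma Jval_le_of_greedy {μ μ' : S → A}
    (hμ' : Tpol P g α μ' (Jval P g α μ) = Tbell P g α (Jval P g α μ)) :
    Jval P g α μ' ≤ Jval P g α μ := by
  refine Jval_le_of_Tpol_le (hP μ') hα0 hα1 ?_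
  rw [hμ']
  exact (Tbell_le_Tpol μ _).trans (Tpol_Jval (hP μ) hα0 hα1).le

lemma Tbell_Jval_eq_self_of_greedy_of_Jval_eq {μ μ' : S → A}
    (hμ' : Tpol P g α μ' (Jval P g α μ) = Tbell P g α (Jval P g α μ))
    (heq : Jval P g α μ' = Jval P g α μ) :
    Tbell P g α (Jval P g α μ) = Jval P g α μ := by
  rw [← hμ', ← heq, Tpol_Jval (hP μ') hα0 hα1]

end MDP

lemma exists_apply_succ_eq_of_antitone_comp {γ β : Type*} [Finite γ] [PartialOrder β]
    {f : ℕ → γ} {F : γ → β} (hF : Antitone (F ∘ f)) : ∃ k, F (f (k + 1)) = F (f k) := by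
  obtain ⟨i, j, hij, hfij⟩ := Finite.exists_ne_map_eq_of_infinite f
  wlog hlt : i < j generalizing i j
  · exact this j i hij.symm hfij.symm (lt_of_le_of_ne (not_lt.1 hlt) hij.symm)
  refine ⟨i, le_antisymm (hF i.le_succ) ?_⟩
  calc F (f i) = F (f j) := congrArg F hfij
    _ ≤ F (f (i + 1)) := hF hlt

theorem stmt_14_general {S A : Type*} [Fintype S] [DecidableEq S] [Fintype A] [Nonempty A]
    (P : S → A → S → ℝ) (g : S → A → ℝ) (α : ℝ)
    (hP0 : ∀ x a y, 0 ≤ P x a y) (hP1 : ∀ x a, ∑ y, P x a y = 1)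
    (hα0 : 0 < α) (hα1 : α < 1)
    (Jstar : S → ℝ) (hJstar : Tbell P g α Jstar = Jstar)
    (μseq : ℕ → S → A)
    (hgreedy : ∀ k : ℕ,
      Tpol P g α (μseq (k + 1)) (Jval P g α (μseq k)) =
        Tbell P g α (Jval P g α (μseq k))) :
    ∃ N : ℕ, Jval P g α (μseq N) = Jstar := by
  have hP := Pmat_mem_rowStochastic hP0 hP1
  have hanti : Antitone (Jval P g α ∘ μseq) :=
    antitone_nat_of_succ_le fun k => Jval_le_of_greedy hP hα0.le hα1 (hgreedy k)
  obtain ⟨k, hk⟩ := exists_apply_succ_eq_of_antitone_comp hanti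
  exact ⟨k, eq_of_Tbell_eq_self hP hα0.le hα1
    (Tbell_Jval_eq_self_of_greedy_of_Jval_eq hP hα0.le hα1 (hgreedy k) hk) hJstar⟩

theorem stmt_14 {S A : Type*} [Fintype S] [Nonempty S] [DecidableEq S] [Fintype A] [Nonempty A]
    (P : S → A → S → ℝ) (g : S → A → ℝ) (α : ℝ)
    (hP0 : ∀ x a y, 0 ≤ P x a y) (hP1 : ∀ x a, ∑ y, P x a y = 1)
    (hα0 : 0 < α) (hα1 : α < 1)
    (Jstar : S → ℝ) (hJstar : Tbell P g α Jstar = Jstar)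
    (μseq : ℕ → S → A)
    (hgreedy : ∀ k : ℕ,
      Tpol P g α (μseq (k + 1)) (Jval P g α (μseq k)) =
        Tbell P g α (Jval P g α (μseq k))) :
    ∃ N : ℕ, Jval P g α (μseq N) = Jstar :=
  stmt_14_general P g α hP0 hP1 hα0 hα1 Jstar hJstar μseq hgreedy
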